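/- For every F ∈ 𝒜 (without any integrability or continuity assumption on σ(F|·)): P^j_*(F) ≤ ∫_* σ(F|H_i) π(dH_i) and ∫^* σ(F|H_i) π(dH_i) ≤ P^{j*}(F). -/

import Mathlib

open Set

open scoped Classical

variable {Ω : Type*}

/-- A field of sets on `Ω`: contains `univ`, closed under complements and finite unions. -/
def IsSetField (𝒜 : Set (Set Ω)) : Prop :=
  Set.univ ∈ 𝒜 ∧ (∀ A ∈ 𝒜, Aᶜ ∈ 𝒜) ∧ ∀ A ∈ 𝒜, ∀ B ∈ 𝒜, A ∪ B ∈ 𝒜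

/-- A finitely additive probability on the field `𝒜`. -/
def IsFAP (𝒜 : Set (Set Ω)) (P : Set Ω → ℝ) : Prop :=
  (∀ A ∈ 𝒜, 0 ≤ P A ∧ P A ≤ 1) ∧ P Set.univ = 1 ∧
    ∀ A ∈ 𝒜, ∀ B ∈ 𝒜, Disjoint A B → P (A ∪ B) = P A + P B

/-- A partition of `Ω` into nonempty pairwise disjoint pieces. -/
def IsPartition {ι : Type*} (H : ι → Set Ω) : Prop :=
  (∀ i, (H i).Nonempty) ∧ (Pairwise fun i j => Disjoint (H i) (H j)) ∧
    (⋃ i, H i) = Set.univ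

/-- A field containing every member of the partition `H` and whose members are
unions of members of the partition. -/
def IsFieldOver {ι : Type*} (H : ι → Set Ω) (𝒜L : Set (Set Ω)) : Prop :=
  IsSetField 𝒜L ∧ (∀ i, H i ∈ 𝒜L) ∧ ∀ A ∈ 𝒜L, ∃ S : Set ι, A = ⋃ i ∈ S, H i

/-- A field containing `𝒜L ∪ 𝒜E` whose members are unions of the atoms `H i ∩ E j`. -/
def IsJointField {ι κ : Type*} (H : ι → Set Ω) (E : κ → Set Ω)
    (𝒜L 𝒜E 𝒜 : Set (Set Ω)) : Prop :=
  IsSetField 𝒜 ∧ 𝒜L ⊆ 𝒜 ∧ 𝒜E ⊆ 𝒜 ∧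
    ∀ A ∈ 𝒜, ∃ S : Set (ι × κ), A = ⋃ p ∈ S, H p.1 ∩ E p.2

/-- A strategy on `𝒜 × ℒ`: each `σ (·|H i)` is a finitely additive probability on `𝒜`
equal to `1` on events implied by `H i`. -/
def IsStrategy {ι : Type*} (𝒜 : Set (Set Ω)) (H : ι → Set Ω) (σ : Set Ω → ι → ℝ) : Prop :=
  ∀ i, IsFAP 𝒜 (fun F => σ F i) ∧ ∀ F ∈ 𝒜, H i ⊆ F → σ F i = 1

/-- A full conditional probability on the field `𝒜` (conditions (C1), (C2), (C3)). -/
def IsFCP (𝒜 : Set (Set Ω)) (P : Set Ω → Set Ω → ℝ) : Prop :=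
  (∀ E ∈ 𝒜, ∀ K ∈ 𝒜, K.Nonempty → P E K = P (E ∩ K) K) ∧
  (∀ K ∈ 𝒜, K.Nonempty → IsFAP 𝒜 fun E => P E K) ∧
  ∀ E ∈ 𝒜, ∀ F ∈ 𝒜, ∀ K ∈ 𝒜, K.Nonempty → (E ∩ K).Nonempty →
    P (E ∩ F) K = P E K * P F (E ∩ K)

/-- `P` extends the prior `π` on `𝒜L` and the strategy `σ` on `𝒜 × ℒ`. -/
def ExtendsPriorStrategy {ι : Type*} (𝒜 𝒜L : Set (Set Ω)) (H : ι → Set Ω)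
    (π : Set Ω → ℝ) (σ : Set Ω → ι → ℝ) (P : Set Ω → Set Ω → ℝ) : Prop :=
  (∀ B ∈ 𝒜L, P B Set.univ = π B) ∧ ∀ F ∈ 𝒜, ∀ i, P F (H i) = σ F i

/-- The set `𝒫` of full conditional probabilities on `𝒜` extending `{π, σ}`. -/
def FCPSet {ι : Type*} (𝒜 𝒜L : Set (Set Ω)) (H : ι → Set Ω)
    (π : Set Ω → ℝ) (σ : Set Ω → ι → ℝ) : Set (Set Ω → Set Ω → ℝ) :=
  {P | IsFCP 𝒜 P ∧ ExtendsPriorStrategy 𝒜 𝒜L H π σ P}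

/-- Lower envelope of a set of conditional probabilities at `F|K`. -/
noncomputable def lowEnv (Ps : Set (Set Ω → Set Ω → ℝ)) (F K : Set Ω) : ℝ :=
  sInf ((fun P => P F K) '' Ps)

/-- Upper envelope of a set of conditional probabilities at `F|K`. -/
noncomputable def upEnv (Ps : Set (Set Ω → Set Ω → ℝ)) (F K : Set Ω) : ℝ :=
  sSup ((fun P => P F K) '' Ps)

/-- A finite partition of `Ω` contained in `𝒜L`. -/
def IsFinPart (𝒜L : Set (Set Ω)) (T : Finset (Set Ω)) : Prop :=
  (↑T : Set (Set Ω)) ⊆ 𝒜L ∧ (∀ A ∈ T, (A : Set Ω).Nonempty) ∧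
    (∀ A ∈ T, ∀ B ∈ T, A ≠ B → Disjoint A B) ∧ ⋃₀ (↑T : Set (Set Ω)) = Set.univ

/-- Lower Stieltjes integral of `X : ℒ → ℝ` with respect to `μ` on `𝒜L`. -/
noncomputable def lowerSInt {ι : Type*} (H : ι → Set Ω) (𝒜L : Set (Set Ω))
    (X : ι → ℝ) (μ : Set Ω → ℝ) : ℝ :=
  sSup {x | ∃ T : Finset (Set Ω), IsFinPart 𝒜L T ∧
    x = ∑ A ∈ T, sInf {y | ∃ i, H i ⊆ A ∧ y = X i} * μ A}

/-- Upper Stieltjes integral of `X : ℒ → ℝ` with respect to `μ` on `𝒜L`. -/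
noncomputable def upperSInt {ι : Type*} (H : ι → Set Ω) (𝒜L : Set (Set Ω))
    (X : ι → ℝ) (μ : Set Ω → ℝ) : ℝ :=
  sInf {x | ∃ T : Finset (Set Ω), IsFinPart 𝒜L T ∧
    x = ∑ A ∈ T, sSup {y | ∃ i, H i ⊆ A ∧ y = X i} * μ A}

/-- `𝒜L`-continuity of a bounded function `X : ℒ → ℝ`. -/
def ALContinuous {ι : Type*} (H : ι → Set Ω) (𝒜L : Set (Set Ω)) (X : ι → ℝ) : Prop :=
  (∃ M : ℝ, ∀ i, |X i| ≤ M) ∧ ∀ t : ℝ, ∀ ε > (0 : ℝ), ∃ A ∈ 𝒜L,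
    (⋃ i ∈ {i | t + ε ≤ X i}, H i) ⊆ A ∧ A ⊆ ⋃ i ∈ {i | t ≤ X i}, H i

/-- Countable additivity of `P` on the field `𝒜`. -/
def CountablyAdditiveOn (𝒜 : Set (Set Ω)) (P : Set Ω → ℝ) : Prop :=
  ∀ A : ℕ → Set Ω, (∀ n, A n ∈ 𝒜) → (Pairwise fun m n => Disjoint (A m) (A n)) →
    (⋃ n, A n) ∈ 𝒜 → HasSum (fun n => P (A n)) (P (⋃ n, A n))

/-- A (normalized) capacity on the field `𝒜`. -/
def IsCapacity (𝒜 : Set (Set Ω)) (φ : Set Ω → ℝ) : Prop :=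
  φ ∅ = 0 ∧ φ Set.univ = 1 ∧ (∀ A ∈ 𝒜, 0 ≤ φ A ∧ φ A ≤ 1) ∧
    ∀ A ∈ 𝒜, ∀ B ∈ 𝒜, A ⊆ B → φ A ≤ φ B

/-- Total monotonicity of a capacity `φ` on the field `𝒜`. -/
def TotallyMonotone (𝒜 : Set (Set Ω)) (φ : Set Ω → ℝ) : Prop :=
  ∀ n : ℕ, 2 ≤ n → ∀ A : Fin n → Set Ω, (∀ i, A i ∈ 𝒜) →
    ∑ s ∈ Finset.univ.powerset.filter (fun s : Finset (Fin n) => s.Nonempty),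
      (-1 : ℝ) ^ (s.card - 1) * φ (⋂ i ∈ s, A i) ≤ φ (⋃ i, A i)

/-- Restriction of a conditional probability to the domain `𝒜 × ℬ⁰`, viewed as a point
of the product space `ℝ^(𝒜 × ℬ⁰)`. -/
def restrictPairs (𝒜 ℬ : Set (Set Ω)) (Q : Set Ω → Set Ω → ℝ)
    (p : {p : Set Ω × Set Ω // p.1 ∈ 𝒜 ∧ p.2 ∈ ℬ ∧ p.2.Nonempty}) : ℝ :=
  Q p.val.1 p.val.2

/-- Restriction of a set function to the domain `𝒜`, viewed as a point of `ℝ^𝒜`. -/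
def restrictDom (𝒜 : Set (Set Ω)) (μ : Set Ω → ℝ) (A : {A : Set Ω // A ∈ 𝒜}) : ℝ :=
  μ A.val

/-- The field of all unions of members of the partition `H`, i.e. `⟨ℒ⟩*`. -/
def unionsOf {ι : Type*} (H : ι → Set Ω) : Set (Set Ω) :=
  {A | ∃ S : Set ι, A = ⋃ i ∈ S, H i}

/-- The set `𝒬^fd` of fully ℒ-disintegrable full conditional probabilities on `𝒜`
extending `{π, σ}`. -/
def QfdSet {ι : Type*} (𝒜 𝒜L : Set (Set Ω)) (H : ι → Set Ω)
    (π : Set Ω → ℝ) (σ : Set Ω → ι → ℝ) : Set (Set Ω → Set Ω → ℝ) :=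
  {Q | IsFCP 𝒜 Q ∧ ExtendsPriorStrategy 𝒜 𝒜L H π σ Q ∧
    ∀ F ∈ 𝒜, ∀ K ∈ 𝒜L, K.Nonempty →
      Q F K = lowerSInt H 𝒜L (fun i => σ F i) fun B => Q B K}

/-- The set `𝒬^fsc` of fully strongly ℒ-conglomerable full conditional probabilities
on `𝒜` extending `{π, σ}`. -/
def QfscSet {ι : Type*} (𝒜 𝒜L : Set (Set Ω)) (H : ι → Set Ω)
    (π : Set Ω → ℝ) (σ : Set Ω → ι → ℝ) : Set (Set Ω → Set Ω → ℝ) :=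
  {Q | IsFCP 𝒜 Q ∧ ExtendsPriorStrategy 𝒜 𝒜L H π σ Q ∧
    ∀ F ∈ 𝒜, ∀ K ∈ 𝒜L, K.Nonempty → ∀ B ∈ 𝒜L, B.Nonempty → B ⊆ K →
      Q B K * sInf {x | ∃ i, H i ⊆ B ∧ x = σ F i} ≤ Q (F ∩ B) K ∧
      Q (F ∩ B) K ≤ Q B K * sSup {x | ∃ i, H i ⊆ B ∧ x = σ F i}}

/-- The set `𝒫^sc` of strongly ℒ-conglomerable joint probabilities consistent with `{π, σ}`. -/
def PscSet {ι : Type*} (𝒜 𝒜L : Set (Set Ω)) (H : ι → Set Ω)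
    (π : Set Ω → ℝ) (σ : Set Ω → ι → ℝ) : Set (Set Ω → ℝ) :=
  {μ | (∃ P ∈ FCPSet 𝒜 𝒜L H π σ, μ = fun F => P F Set.univ) ∧
    ∀ F ∈ 𝒜, ∀ B ∈ 𝒜L, B.Nonempty →
      π B * sInf {x | ∃ i, H i ⊆ B ∧ x = σ F i} ≤ μ (F ∩ B) ∧
      μ (F ∩ B) ≤ π B * sSup {x | ∃ i, H i ⊆ B ∧ x = σ F i}}

/-- The set `𝒫^fd` of fully ℒ-disintegrable conditional probabilities on `𝒜 × 𝒜L⁰`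
extending `{π, σ}`. -/
def PfdSet {ι : Type*} (𝒜 𝒜L : Set (Set Ω)) (H : ι → Set Ω)
    (π : Set Ω → ℝ) (σ : Set Ω → ι → ℝ) : Set (Set Ω → Set Ω → ℝ) :=
  {P | (∀ E ∈ 𝒜, ∀ K ∈ 𝒜L, K.Nonempty → P E K = P (E ∩ K) K) ∧
    (∀ K ∈ 𝒜L, K.Nonempty → IsFAP 𝒜 fun E => P E K) ∧
    (∀ E ∈ 𝒜, ∀ F ∈ 𝒜, ∀ K ∈ 𝒜L, K.Nonempty → E ∩ K ∈ 𝒜L → (E ∩ K).Nonempty →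
      P (E ∩ F) K = P E K * P F (E ∩ K)) ∧
    (∀ B ∈ 𝒜L, P B Set.univ = π B) ∧ (∀ F ∈ 𝒜, ∀ i, P F (H i) = σ F i) ∧
    ∀ F ∈ 𝒜, ∀ K ∈ 𝒜L, K.Nonempty →
      P F K = lowerSInt H 𝒜L (fun i => σ F i) fun B => P B K}

/-- The Choquet integral `C∫ X dφ = ∫₀¹ φ₊((X ≥ t)) dt` of a `[0,1]`-valued `X : ℒ → ℝ`
with respect to a capacity `φ` on `𝒜L`, where `φ₊` is the inner extension of `φ`. -/
noncomputable def choquetInt {ι : Type*} (H : ι → Set Ω) (𝒜L : Set (Set Ω))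
    (X : ι → ℝ) (φ : Set Ω → ℝ) : ℝ :=
  ∫ t in (0 : ℝ)..(1 : ℝ),
    sSup {y | ∃ B ∈ 𝒜L, B ⊆ (⋃ i ∈ {i | t ≤ X i}, H i) ∧ y = φ B}

/-!
The upper Stieltjes integral `X ↦ ∫^* X dπ` is sublinear on bounded functions on `ℒ`, so by
Hahn–Banach, for each bounded `X`, some linear functional `L` below it satisfies
`L X = ∫^* X dπ`; taking `X = σ(F|·)`, resp. `X = -σ(F|·)`, makes `L (σ(F|·))` the upper, resp.
lower, integral. Evaluating `L` along the strategy, `μ G := L (σ(G|·))`, gives a finitely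
additive joint probability with marginal `π` and `μ (G ∩ H i) = σ(G|H i) μ (H i)`. A full
conditional probability with `P(·|Ω) = μ` and `P(·|H i) = σ(·|H i)` is then obtained
lexicographically: condition on `K` through the first member of the list `μ`, `σ(·|H i)`
(`i` well-ordered), `δ_ω` (`ω` well-ordered) that gives `K` positive mass. So `P(F|Ω) = μ F`
attains each integral, which bounds the envelopes.
-/

def IsFinDecomp (𝒜 : Set (Set Ω)) (T : Finset (Set Ω)) : Prop :=
  (T : Set (Set Ω)) ⊆ 𝒜 ∧ (T : Set (Set Ω)).PairwiseDisjoint id ∧ ⋃₀ (T : Set (Set Ω)) = univ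

namespace IsSetField

variable {𝒜 : Set (Set Ω)}

theorem isSetAlgebra (h : IsSetField 𝒜) : MeasureTheory.IsSetAlgebra 𝒜 where
  empty_mem := by simpa using h.2.1 _ h.1
  compl_mem := h.2.1
  union_mem _ _ hs ht := h.2.2 _ hs _ ht

theorem inter_mem (h : IsSetField 𝒜) {A B : Set Ω} (hA : A ∈ 𝒜) (hB : B ∈ 𝒜) : A ∩ B ∈ 𝒜 :=
  h.isSetAlgebra.inter_mem hA hB

end IsSetField

namespace IsFAP

variable {𝒜 : Set (Set Ω)} {P : Set Ω → ℝ}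

theorem nonneg (hP : IsFAP 𝒜 P) {A : Set Ω} (hA : A ∈ 𝒜) : 0 ≤ P A :=
  (hP.1 A hA).1

theorem empty (hP : IsFAP 𝒜 P) (h𝒜 : IsSetField 𝒜) : P ∅ = 0 := by
  have hempty := h𝒜.isSetAlgebra.empty_mem
  simpa using hP.2.2 ∅ hempty ∅ hempty (disjoint_empty _)

theorem mono (hP : IsFAP 𝒜 P) (h𝒜 : IsSetField 𝒜) {A B : Set Ω} (hA : A ∈ 𝒜) (hB : B ∈ 𝒜)
    (hAB : A ⊆ B) : P A ≤ P B := by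
  have hBA : B \ A ∈ 𝒜 := h𝒜.isSetAlgebra.sdiff_mem hB hA
  have := hP.2.2 A hA _ hBA disjoint_sdiff_right
  rw [union_sdiff_cancel hAB] at this
  linarith [hP.nonneg hBA]

theorem add_compl (hP : IsFAP 𝒜 P) (h𝒜 : IsSetField 𝒜) {A : Set Ω} (hA : A ∈ 𝒜) :
    P A + P Aᶜ = 1 := by
  rw [← hP.2.1, ← hP.2.2 A hA _ (h𝒜.2.1 A hA) disjoint_compl_right, union_compl_self]

noncomputable def toAddContent (hP : IsFAP 𝒜 P) (h𝒜 : IsSetField 𝒜) :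
    MeasureTheory.AddContent ℝ 𝒜 :=
  h𝒜.isSetAlgebra.isSetRing.addContent_of_union P (hP.empty h𝒜)
    fun hA hB hAB => hP.2.2 _ hA _ hB hAB

theorem eq_sum_inter (hP : IsFAP 𝒜 P) (h𝒜 : IsSetField 𝒜) {T : Finset (Set Ω)}
    (hT : IsFinDecomp 𝒜 T) {A : Set Ω} (hA : A ∈ 𝒜) : P A = ∑ B ∈ T, P (A ∩ B) := by
  obtain ⟨hT𝒜, hdisj, hcover⟩ := hT
  have hunion : ⋃ B ∈ T, A ∩ B = A := by
    have hcover' : ⋃ B ∈ T, B = univ := sUnion_eq_biUnion.symm.trans hcover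
    rw [← inter_iUnion₂, hcover', inter_univ]
  have := MeasureTheory.addContent_biUnion_eq (m := hP.toAddContent h𝒜)
    h𝒜.isSetAlgebra.isSetRing (fun B hB => h𝒜.inter_mem hA (hT𝒜 hB))
    (hdisj.mono_on fun B _ => inter_subset_right)
  rwa [hunion] at this

theorem restrict (hP : IsFAP 𝒜 P) (h𝒜 : IsSetField 𝒜) {K : Set Ω} (hK : K ∈ 𝒜)
    (hpos : 0 < P K) : IsFAP 𝒜 fun E => P (E ∩ K) / P K := by
  refine ⟨fun A hA => ?_, by simp [hpos.ne'], fun A hA B hB hAB => ?_⟩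
  · have hAK := h𝒜.inter_mem hA hK
    exact ⟨div_nonneg (hP.nonneg hAK) hpos.le,
      (div_le_one hpos).2 (hP.mono h𝒜 hAK hK inter_subset_right)⟩
  · simp only
    rw [union_inter_distrib_right, hP.2.2 _ (h𝒜.inter_mem hA hK) _
      (h𝒜.inter_mem hB hK) (hAB.mono inter_subset_left inter_subset_left), add_div]

end IsFAP

theorem isFAP_indicator {𝒜 : Set (Set Ω)} (ω : Ω) : IsFAP 𝒜 fun E => E.indicator 1 ω := by
  refine ⟨fun A _ => ?_, by simp, fun A _ B _ hAB => ?_⟩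
  · by_cases h : ω ∈ A <;> simp [h]
  · exact congrFun (indicator_union_of_disjoint hAB 1) ω

section FinDecomp

variable {𝒜 : Set (Set Ω)} {T T' : Finset (Set Ω)}

theorem IsFinPart.isFinDecomp (hT : IsFinPart 𝒜 T) : IsFinDecomp 𝒜 T :=
  ⟨hT.1, fun A hA B hB hAB => hT.2.2.1 A hA B hB hAB, hT.2.2.2⟩

theorem IsFinDecomp.isFinPart_filter_nonempty (hT : IsFinDecomp 𝒜 T) :
    IsFinPart 𝒜 (T.filter Set.Nonempty) := by
  refine ⟨fun A hA => hT.1 (Finset.mem_filter.1 hA).1, fun A hA => (Finset.mem_filter.1 hA).2,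
    fun A hA B hB hAB => hT.2.1 (Finset.mem_filter.1 hA).1 (Finset.mem_filter.1 hB).1 hAB, ?_⟩
  rw [← hT.2.2]
  ext x
  simp only [mem_sUnion, Finset.coe_filter, mem_ofPred_eq, Finset.mem_coe]
  exact ⟨fun ⟨A, hA, hx⟩ => ⟨A, hA.1, hx⟩, fun ⟨A, hA, hx⟩ => ⟨A, ⟨hA, x, hx⟩, hx⟩⟩

theorem isFinDecomp_pair (h𝒜 : IsSetField 𝒜) {B : Set Ω} (hB : B ∈ 𝒜) :
    IsFinDecomp 𝒜 {B, Bᶜ} := by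
  refine ⟨?_, ?_, by simp⟩
  · simp [insert_subset_iff, hB, h𝒜.2.1 B hB]
  · simp only [Finset.coe_insert, Finset.coe_singleton]
    exact pairwise_pair_of_symm.2 fun _ => disjoint_compl_right

theorem IsFinDecomp.pairwiseDisjoint_inter (hT : IsFinDecomp 𝒜 T) (hT' : IsFinDecomp 𝒜 T') :
    (↑(T ×ˢ T') : Set (Set Ω × Set Ω)).PairwiseDisjoint fun p => p.1 ∩ p.2 := by
  rintro ⟨A, B⟩ hp ⟨A', B'⟩ hq hne
  simp only [Finset.coe_product, mem_prod, Finset.mem_coe] at hp hq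
  rcases eq_or_ne A A' with rfl | hA
  · exact (hT'.2.1 hp.2 hq.2 fun h => hne (h ▸ rfl)).mono inter_subset_right inter_subset_right
  · exact (hT.2.1 hp.1 hq.1 hA).mono inter_subset_left inter_subset_left

theorem IsFinDecomp.image_inter (h𝒜 : IsSetField 𝒜) (hT : IsFinDecomp 𝒜 T)
    (hT' : IsFinDecomp 𝒜 T') : IsFinDecomp 𝒜 ((T ×ˢ T').image fun p => p.1 ∩ p.2) := by
  refine ⟨?_, ?_, ?_⟩
  · simp only [Finset.coe_image, image_subset_iff]
    rintro ⟨A, B⟩ hp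
    simp only [Finset.coe_product, mem_prod, Finset.mem_coe] at hp
    exact h𝒜.inter_mem (hT.1 hp.1) (hT'.1 hp.2)
  · simp only [Finset.coe_image]
    rintro _ ⟨p, hp, rfl⟩ _ ⟨q, hq, rfl⟩ hne
    exact hT.pairwiseDisjoint_inter hT' hp hq fun h => hne (h ▸ rfl)
  · refine eq_univ_of_forall fun x => ?_
    obtain ⟨A, hA, hxA⟩ := mem_sUnion.1 (hT.2.2.symm ▸ mem_univ x : x ∈ ⋃₀ (T : Set (Set Ω)))
    obtain ⟨B, hB, hxB⟩ :=
      mem_sUnion.1 (hT'.2.2.symm ▸ mem_univ x : x ∈ ⋃₀ (T' : Set (Set Ω)))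
    exact ⟨A ∩ B, by simp only [Finset.coe_image]; exact ⟨(A, B), by simp_all, rfl⟩, hxA, hxB⟩

end FinDecomp

section Lexicographic

variable {α : Type*} (r : α → α → Prop) [IsWellOrder α r] (ν : α → Set Ω → ℝ)

noncomputable def lexFirst {K : Set Ω} (h : ∃ a, 0 < ν a K) : α :=
  (IsWellFounded.wf (r := r)).min {a | 0 < ν a K} h

noncomputable def lexCond (E K : Set Ω) : ℝ :=
  if h : ∃ a, 0 < ν a K then ν (lexFirst r ν h) (E ∩ K) / ν (lexFirst r ν h) K else 0

variable {r ν}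

theorem lexFirst_spec {K : Set Ω} (h : ∃ a, 0 < ν a K) :
    0 < ν (lexFirst r ν h) K ∧ ∀ b, r b (lexFirst r ν h) → ν b K ≤ 0 :=
  ⟨(IsWellFounded.wf (r := r)).min_mem _ h,
    fun _ hb => not_lt.1 fun hpos => (IsWellFounded.wf (r := r)).not_lt_min _ hpos hb⟩

theorem lexCond_eq {K : Set Ω} {a : α} (ha : 0 < ν a K) (hmin : ∀ b, r b a → ν b K ≤ 0)
    (E : Set Ω) : lexCond r ν E K = ν a (E ∩ K) / ν a K := by
  have h : ∃ a, 0 < ν a K := ⟨a, ha⟩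
  obtain ⟨hpos, hfirst⟩ := lexFirst_spec (r := r) h
  have heq : lexFirst r ν h = a := by
    rcases trichotomous_of r (lexFirst r ν h) a with hlt | heq | hgt
    · exact absurd (hmin _ hlt) (not_le.2 hpos)
    · exact heq
    · exact absurd (hfirst a hgt) (not_le.2 ha)
  rw [lexCond, dif_pos h, heq]

theorem isFCP_lexCond {𝒜 : Set (Set Ω)} (h𝒜 : IsSetField 𝒜) (hν : ∀ a, IsFAP 𝒜 (ν a))
    (hcharge : ∀ K ∈ 𝒜, K.Nonempty → ∃ a, 0 < ν a K) : IsFCP 𝒜 (lexCond r ν) := by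
  refine ⟨fun E _ K _ _ => by simp only [lexCond, inter_assoc, inter_self], fun K hK hKne => ?_,
    fun E hE F hF K hK hKne _ => ?_⟩
  · obtain ⟨ha, hmin⟩ := lexFirst_spec (r := r) (hcharge K hK hKne)
    simp only [lexCond_eq ha hmin]
    exact (hν _).restrict h𝒜 hK ha
  · obtain ⟨ha, hmin⟩ := lexFirst_spec (r := r) (hcharge K hK hKne)
    set a := lexFirst r ν (hcharge K hK hKne)
    have hEK := h𝒜.inter_mem hE hK
    have hEFK : E ∩ F ∩ K ∈ 𝒜 := h𝒜.inter_mem (h𝒜.inter_mem hE hF) hK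
    rw [lexCond_eq ha hmin, lexCond_eq ha hmin]
    rcases (hν a).nonneg hEK |>.lt_or_eq with hpos | hzero
    · have hmin' : ∀ b, r b a → ν b (E ∩ K) ≤ 0 := fun b hb =>
        ((hν b).mono h𝒜 hEK hK inter_subset_right).trans (hmin b hb)
      rw [lexCond_eq hpos hmin', show F ∩ (E ∩ K) = E ∩ F ∩ K by ac_rfl]
      field_simp
    · have hsub : E ∩ F ∩ K ⊆ E ∩ K := fun x hx => ⟨hx.1.1, hx.2⟩
      have : ν a (E ∩ F ∩ K) = 0 :=
        le_antisymm (hzero ▸ (hν a).mono h𝒜 hEFK hEK hsub) ((hν a).nonneg hEFK)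
      rw [← hzero, this]
      simp

end Lexicographic

def boundedFunctions (ι : Type*) : Submodule ℝ (ι → ℝ) where
  carrier := {X | ∃ M, ∀ i, |X i| ≤ M}
  add_mem' := fun ⟨M, hM⟩ ⟨M', hM'⟩ =>
    ⟨M + M', fun i => (abs_add_le _ _).trans (add_le_add (hM i) (hM' i))⟩
  zero_mem' := ⟨0, fun i => by simp⟩
  smul_mem' c X := fun ⟨M, hM⟩ =>
    ⟨|c| * M, fun i => by simpa [abs_mul] using mul_le_mul_of_nonneg_left (hM i) (abs_nonneg c)⟩

theorem mem_boundedFunctions {ι : Type*} {X : ι → ℝ} :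
    X ∈ boundedFunctions ι ↔ ∃ M, ∀ i, |X i| ≤ M :=
  Iff.rfl

namespace IsStrategy

variable {ι : Type*} {𝒜 : Set (Set Ω)} {H : ι → Set Ω} {σ : Set Ω → ι → ℝ}

theorem abs_le_one (hσ : IsStrategy 𝒜 H σ) {G : Set Ω} (hG : G ∈ 𝒜) (i : ι) : |σ G i| ≤ 1 :=
  abs_le.2 ⟨by linarith [(hσ i).1.nonneg hG], ((hσ i).1.1 G hG).2⟩

def toBounded (hσ : IsStrategy 𝒜 H σ) {G : Set Ω} (hG : G ∈ 𝒜) : boundedFunctions ι :=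
  ⟨fun i => σ G i, 1, hσ.abs_le_one hG⟩

@[simp]
theorem coe_toBounded (hσ : IsStrategy 𝒜 H σ) {G : Set Ω} (hG : G ∈ 𝒜) :
    (hσ.toBounded hG : ι → ℝ) = fun i => σ G i :=
  rfl

theorem apply_cell_self (hσ : IsStrategy 𝒜 H σ) (hH𝒜 : ∀ i, H i ∈ 𝒜) (i : ι) :
    σ (H i) i = 1 :=
  (hσ i).2 _ (hH𝒜 i) subset_rfl

theorem apply_eq_zero (hσ : IsStrategy 𝒜 H σ) (h𝒜 : IsSetField 𝒜) (hH𝒜 : ∀ i, H i ∈ 𝒜)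
    {G : Set Ω} (hG : G ∈ 𝒜) {i : ι} (hGi : Disjoint G (H i)) : σ G i = 0 := by
  have hle := (hσ i).1.mono h𝒜 hG (h𝒜.2.1 _ (hH𝒜 i)) hGi.subset_compl_right
  have hcompl := (hσ i).1.add_compl h𝒜 (hH𝒜 i)
  rw [hσ.apply_cell_self hH𝒜] at hcompl
  linarith [(hσ i).1.nonneg hG]

theorem apply_inter_cell (hσ : IsStrategy 𝒜 H σ) (h𝒜 : IsSetField 𝒜) (hH𝒜 : ∀ i, H i ∈ 𝒜)
    (hH : IsPartition H) {G : Set Ω} (hG : G ∈ 𝒜) (i j : ι) :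
    σ (G ∩ H i) j = σ G i * σ (H i) j := by
  rcases eq_or_ne i j with rfl | hij
  · have hdiff := h𝒜.isSetAlgebra.sdiff_mem hG (hH𝒜 i)
    have hsplit := (hσ i).1.2.2 _ (h𝒜.inter_mem hG (hH𝒜 i)) _ hdiff disjoint_sdiff_inter.symm
    simp only [inter_union_sdiff, hσ.apply_eq_zero h𝒜 hH𝒜 hdiff disjoint_sdiff_left] at hsplit
    rw [hσ.apply_cell_self hH𝒜, mul_one]
    linarith
  · have hdisj : Disjoint (H i) (H j) := hH.2.1 hij
    rw [hσ.apply_eq_zero h𝒜 hH𝒜 (h𝒜.inter_mem hG (hH𝒜 i)) (hdisj.mono_left inter_subset_right),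
      hσ.apply_eq_zero h𝒜 hH𝒜 (hH𝒜 i) hdisj, mul_zero]

end IsStrategy

def IsJointOf {ι : Type*} (𝒜 𝒜L : Set (Set Ω)) (H : ι → Set Ω) (π : Set Ω → ℝ)
    (σ : Set Ω → ι → ℝ) (μ : Set Ω → ℝ) : Prop :=
  IsFAP 𝒜 μ ∧ (∀ B ∈ 𝒜L, μ B = π B) ∧ ∀ G ∈ 𝒜, ∀ i, μ (G ∩ H i) = σ G i * μ (H i)

section JointToFCP

noncomputable def jointFamily {ι : Type*} (σ : Set Ω → ι → ℝ) (μ : Set Ω → ℝ) :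
    Unit ⊕ (ι ⊕ Ω) → Set Ω → ℝ
  | .inl _ => μ
  | .inr (.inl i) => fun G => σ G i
  | .inr (.inr ω) => fun G => G.indicator 1 ω

/-- `μ` comes first so that conditioning on `Ω` returns `μ`; each `σ(·|H i)` precedes the point
masses so that conditioning on a `μ`-null cell returns `σ(·|H i)`; the point masses make every
nonempty event charged. -/
abbrev jointOrder (α β : Type*) : Unit ⊕ (α ⊕ β) → Unit ⊕ (α ⊕ β) → Prop :=
  Sum.Lex (· < ·) (Sum.Lex WellOrderingRel WellOrderingRel)

theorem not_jointOrder_inl {α β : Type*} (b : Unit ⊕ (α ⊕ β)) :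
    ¬ jointOrder α β b (.inl ()) := by
  rintro (⟨h⟩ | _)
  exact lt_irrefl _ h

variable {ι : Type*} {𝒜 𝒜L : Set (Set Ω)} {H : ι → Set Ω} {π : Set Ω → ℝ}
  {σ : Set Ω → ι → ℝ} {μ : Set Ω → ℝ}

theorem lexCond_jointFamily_univ (hμ : IsJointOf 𝒜 𝒜L H π σ μ) (G : Set Ω) :
    lexCond (jointOrder ι Ω) (jointFamily σ μ) G univ = μ G := by
  rw [lexCond_eq (a := .inl ()) (by simp [jointFamily, hμ.1.2.1])
    fun b hb => absurd hb (not_jointOrder_inl b)]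
  simp [jointFamily, hμ.1.2.1]

theorem lexCond_jointFamily_mem_FCPSet (h𝒜 : IsSetField 𝒜) (hH𝒜 : ∀ i, H i ∈ 𝒜)
    (hH : IsPartition H) (hσ : IsStrategy 𝒜 H σ) (hμ : IsJointOf 𝒜 𝒜L H π σ μ) :
    lexCond (jointOrder ι Ω) (jointFamily σ μ) ∈ FCPSet 𝒜 𝒜L H π σ := by
  obtain ⟨hμFAP, hμπ, hμσ⟩ := hμ
  have hFAP : ∀ a, IsFAP 𝒜 (jointFamily σ μ a) := by
    rintro (_ | i | ω)
    exacts [hμFAP, (hσ i).1, isFAP_indicator ω]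
  have hcharge : ∀ K ∈ 𝒜, K.Nonempty → ∃ a, 0 < jointFamily σ μ a K :=
    fun K _ ⟨ω, hω⟩ => ⟨.inr (.inr ω), by simp [jointFamily, hω]⟩
  refine ⟨isFCP_lexCond h𝒜 hFAP hcharge, fun B hB => ?_, fun G hG i => ?_⟩
  · rw [lexCond_jointFamily_univ ⟨hμFAP, hμπ, hμσ⟩, hμπ B hB]
  rcases (hμFAP.nonneg (hH𝒜 i)).lt_or_eq with hpos | hzero
  · rw [lexCond_eq (a := .inl ()) hpos fun b hb => absurd hb (not_jointOrder_inl b)]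
    simp only [jointFamily]
    rw [hμσ G hG i]
    field_simp
  · have hfirst : ∀ b, jointOrder ι Ω b (.inr (.inl i)) → jointFamily σ μ b (H i) ≤ 0 := by
      rintro (_ | j | ω) hb
      · exact hzero.ge
      · have hji : WellOrderingRel j i := by simpa using hb
        exact (hσ.apply_eq_zero h𝒜 hH𝒜 (hH𝒜 i) (hH.2.1 (ne_of_irrefl hji).symm)).le
      · simp at hb
    have hpos : 0 < jointFamily σ μ (.inr (.inl i)) (H i) := by
      simp [jointFamily, hσ.apply_cell_self hH𝒜]
    rw [lexCond_eq hpos hfirst]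
    simp [jointFamily, hσ.apply_inter_cell h𝒜 hH𝒜 hH hG, hσ.apply_cell_self hH𝒜]

end JointToFCP

theorem LinearMap.exists_le_sublinear_apply_eq {E : Type*} [AddCommGroup E] [Module ℝ E]
    (N : E → ℝ) (N_hom : ∀ c : ℝ, 0 < c → ∀ x, N (c • x) = c * N x)
    (N_add : ∀ x y, N (x + y) ≤ N x + N y) (x : E) :
    ∃ L : E →ₗ[ℝ] ℝ, (∀ y, L y ≤ N y) ∧ L x = N x := by
  have N_zero : N 0 = 0 := by
    have := N_hom 2 two_pos 0
    rw [smul_zero] at this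
    linarith
  have hzero : ∀ c : ℝ, c • x = 0 → RingHom.id ℝ c • N x = 0 := fun c hc => by
    rcases smul_eq_zero.1 hc with rfl | rfl
    · simp
    · rw [N_zero, smul_zero]
  let f : E →ₗ.[ℝ] ℝ := LinearPMap.mkSpanSingleton' x (N x) hzero
  have hdom : ∀ y : f.domain, f y ≤ N y := by
    rintro ⟨y, hy⟩
    obtain ⟨c, rfl⟩ := Submodule.mem_span_singleton.1 hy
    rw [LinearPMap.mkSpanSingleton'_apply, RingHom.id_apply, smul_eq_mul]
    rcases lt_trichotomy c 0 with hc | rfl | hc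
    · have hneg : N (c • x) = -c * N (-x) := by rw [← N_hom _ (neg_pos.2 hc), neg_smul_neg]
      have := N_add x (-x)
      rw [add_neg_cancel, N_zero] at this
      rw [hneg]
      nlinarith
    · simp [N_zero]
    · exact (N_hom c hc x).ge
  obtain ⟨L, hLf, hLN⟩ := exists_extension_of_le_sublinear f N N_hom N_add hdom
  exact ⟨L, hLN, (hLf ⟨x, Submodule.mem_span_singleton_self x⟩).trans
    (LinearPMap.mkSpanSingleton'_apply_self _ _ _ _)⟩

theorem IsFieldOver.exists_subset {ι : Type*} {H : ι → Set Ω} {𝒜L : Set (Set Ω)}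
    (h𝒜L : IsFieldOver H 𝒜L) {A : Set Ω} (hA : A ∈ 𝒜L) (hne : A.Nonempty) : ∃ i, H i ⊆ A := by
  obtain ⟨S, rfl⟩ := h𝒜L.2.2 A hA
  obtain ⟨x, hx⟩ := hne
  obtain ⟨i, hi, -⟩ := mem_iUnion₂.1 hx
  exact ⟨i, subset_biUnion_of_mem hi⟩

section UpperIntegral

variable {ι : Type*} {H : ι → Set Ω} {𝒜L : Set (Set Ω)} {π : Set Ω → ℝ} {X Y : ι → ℝ}

noncomputable def cellSup (H : ι → Set Ω) (X : ι → ℝ) (A : Set Ω) : ℝ :=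
  sSup {y | ∃ i, H i ⊆ A ∧ y = X i}

noncomputable def upperSum (H : ι → Set Ω) (X : ι → ℝ) (π : Set Ω → ℝ) (T : Finset (Set Ω)) :
    ℝ :=
  ∑ A ∈ T, cellSup H X A * π A

theorem upperSInt_eq_sInf :
    upperSInt H 𝒜L X π = sInf {x | ∃ T, IsFinPart 𝒜L T ∧ x = upperSum H X π T} :=
  rfl

theorem lowerSInt_eq_neg_upperSInt_neg : lowerSInt H 𝒜L X π = -upperSInt H 𝒜L (-X) π := by
  have hcell (A : Set Ω) : sInf {y | ∃ i, H i ⊆ A ∧ y = X i} = -cellSup H (-X) A := by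
    rw [Real.sInf_def, cellSup]
    congr 2
    ext y
    simp only [mem_neg, mem_ofPred_eq, Pi.neg_apply, neg_eq_iff_eq_neg]
  have hsums : {x | ∃ T, IsFinPart 𝒜L T ∧ x = upperSum H (-X) π T} =
      -{x | ∃ T, IsFinPart 𝒜L T ∧ x = ∑ A ∈ T, sInf {y | ∃ i, H i ⊆ A ∧ y = X i} * π A} := by
    ext x
    simp only [mem_neg, mem_ofPred_eq, hcell, upperSum, neg_mul, Finset.sum_neg_distrib,
      neg_eq_iff_eq_neg, neg_neg]
  rw [upperSInt_eq_sInf, hsums, Real.sInf_neg, neg_neg, lowerSInt]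

theorem cellSup_smul {c : ℝ} (hc : 0 ≤ c) (A : Set Ω) :
    cellSup H (c • X) A = c * cellSup H X A := by
  rw [cellSup, cellSup, ← smul_eq_mul, ← Real.sSup_smul_of_nonneg hc]
  congr 1
  ext y
  simp only [mem_smul_set, mem_ofPred_eq, Pi.smul_apply, smul_eq_mul]
  constructor
  · rintro ⟨i, hi, rfl⟩
    exact ⟨X i, ⟨i, hi, rfl⟩, rfl⟩
  · rintro ⟨_, ⟨i, hi, rfl⟩, rfl⟩
    exact ⟨i, hi, rfl⟩

theorem upperSInt_smul {c : ℝ} (hc : 0 ≤ c) :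
    upperSInt H 𝒜L (c • X) π = c * upperSInt H 𝒜L X π := by
  have hsum (T : Finset (Set Ω)) : upperSum H (c • X) π T = c * upperSum H X π T := by
    simp only [upperSum, cellSup_smul hc, Finset.mul_sum, mul_assoc]
  rw [upperSInt_eq_sInf, upperSInt_eq_sInf, ← smul_eq_mul, ← Real.sInf_smul_of_nonneg hc]
  congr 1
  ext x
  simp only [mem_smul_set, mem_ofPred_eq, hsum, smul_eq_mul]
  constructor
  · rintro ⟨T, hT, rfl⟩
    exact ⟨_, ⟨T, hT, rfl⟩, rfl⟩
  · rintro ⟨_, ⟨T, hT, rfl⟩, rfl⟩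
    exact ⟨T, hT, rfl⟩

section Bounded

variable {M M' : ℝ}

theorem le_cellSup (hX : ∀ i, |X i| ≤ M) {A : Set Ω} {i : ι} (hi : H i ⊆ A) :
    X i ≤ cellSup H X A :=
  le_csSup ⟨M, by rintro _ ⟨j, -, rfl⟩; exact (abs_le.1 (hX j)).2⟩ ⟨i, hi, rfl⟩

theorem cellSup_mul_le_mul (h𝒜L : IsFieldOver H 𝒜L) (hπ : IsFAP 𝒜L π) {A : Set Ω}
    (hA : A ∈ 𝒜L) {a : ℝ} (hle : ∀ i, H i ⊆ A → X i ≤ a) : cellSup H X A * π A ≤ a * π A := by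
  rcases A.eq_empty_or_nonempty with rfl | hne
  · simp [hπ.empty h𝒜L.1]
  · obtain ⟨i, hi⟩ := h𝒜L.exists_subset hA hne
    exact mul_le_mul_of_nonneg_right
      (csSup_le ⟨X i, i, hi, rfl⟩ (by rintro _ ⟨j, hj, rfl⟩; exact hle j hj)) (hπ.nonneg hA)

theorem neg_le_upperSum (h𝒜L : IsFieldOver H 𝒜L) (hπ : IsFAP 𝒜L π) (hX : ∀ i, |X i| ≤ M)
    {T : Finset (Set Ω)} (hT : IsFinPart 𝒜L T) : -M ≤ upperSum H X π T := by
  have hsum : ∑ A ∈ T, π A = 1 := by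
    simpa [hπ.2.1] using (hπ.eq_sum_inter h𝒜L.1 hT.isFinDecomp h𝒜L.1.1).symm
  calc -M = ∑ A ∈ T, -M * π A := by rw [← Finset.mul_sum, hsum, mul_one]
    _ ≤ upperSum H X π T := Finset.sum_le_sum fun A hA => by
      obtain ⟨i, hi⟩ := h𝒜L.exists_subset (hT.1 hA) (hT.2.1 A hA)
      exact mul_le_mul_of_nonneg_right ((abs_le.1 (hX i)).1.trans (le_cellSup hX hi))
        (hπ.nonneg (hT.1 hA))

theorem upperSInt_le_upperSum (h𝒜L : IsFieldOver H 𝒜L) (hπ : IsFAP 𝒜L π)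
    (hX : ∀ i, |X i| ≤ M) {T : Finset (Set Ω)} (hT : IsFinDecomp 𝒜L T) :
    upperSInt H 𝒜L X π ≤ upperSum H X π T := by
  have hfilter : upperSum H X π (T.filter Set.Nonempty) = upperSum H X π T :=
    Finset.sum_filter_of_ne fun A _ hA => nonempty_iff_ne_empty.2 fun h => hA (by
      simp [h, hπ.empty h𝒜L.1])
  rw [← hfilter]
  exact csInf_le ⟨-M, by rintro _ ⟨T, hT, rfl⟩; exact neg_le_upperSum h𝒜L hπ hX hT⟩
    ⟨_, hT.isFinPart_filter_nonempty, rfl⟩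

theorem upperSInt_le_of_forall_le [Nonempty Ω] (h𝒜L : IsFieldOver H 𝒜L) (hπ : IsFAP 𝒜L π)
    (hX : ∀ i, |X i| ≤ M) {B : Set Ω} (hB : B ∈ 𝒜L) {a b : ℝ} (ha : ∀ i, H i ⊆ B → X i ≤ a)
    (hb : ∀ i, H i ⊆ Bᶜ → X i ≤ b) : upperSInt H 𝒜L X π ≤ a * π B + b * π Bᶜ := by
  refine (upperSInt_le_upperSum h𝒜L hπ hX (isFinDecomp_pair h𝒜L.1 hB)).trans ?_
  rw [upperSum, Finset.sum_pair ne_compl_self]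
  exact add_le_add (cellSup_mul_le_mul h𝒜L hπ hB ha)
    (cellSup_mul_le_mul h𝒜L hπ (h𝒜L.1.2.1 B hB) hb)

theorem upperSum_image_inter_le (h𝒜L : IsFieldOver H 𝒜L) (hπ : IsFAP 𝒜L π)
    (hX : ∀ i, |X i| ≤ M) (hY : ∀ i, |Y i| ≤ M') {T T' : Finset (Set Ω)}
    (hT : IsFinDecomp 𝒜L T) (hT' : IsFinDecomp 𝒜L T') :
    upperSum H (X + Y) π ((T ×ˢ T').image fun p => p.1 ∩ p.2) ≤
      upperSum H X π T + upperSum H Y π T' := by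
  have hsplit (A : Set Ω) (hA : A ∈ T) : π A = ∑ B ∈ T', π (A ∩ B) :=
    hπ.eq_sum_inter h𝒜L.1 hT' (hT.1 hA)
  have hsplit' (B : Set Ω) (hB : B ∈ T') : π B = ∑ A ∈ T, π (A ∩ B) := by
    simp only [hπ.eq_sum_inter h𝒜L.1 hT (hT'.1 hB), inter_comm]
  calc upperSum H (X + Y) π ((T ×ˢ T').image fun p => p.1 ∩ p.2)
      = ∑ p ∈ T ×ˢ T', cellSup H (X + Y) (p.1 ∩ p.2) * π (p.1 ∩ p.2) :=
        Finset.sum_image_of_disjoint (by simp [hπ.empty h𝒜L.1]) (hT.pairwiseDisjoint_inter hT')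
    _ ≤ ∑ p ∈ T ×ˢ T', (cellSup H X p.1 + cellSup H Y p.2) * π (p.1 ∩ p.2) := by
        refine Finset.sum_le_sum fun p hp => cellSup_mul_le_mul h𝒜L hπ ?_ fun i hi =>
          add_le_add (le_cellSup hX (hi.trans inter_subset_left))
            (le_cellSup hY (hi.trans inter_subset_right))
        rw [Finset.mem_product] at hp
        exact h𝒜L.1.inter_mem (hT.1 hp.1) (hT'.1 hp.2)
    _ = upperSum H X π T + upperSum H Y π T' := by
        simp only [add_mul, Finset.sum_add_distrib]
        rw [Finset.sum_product, Finset.sum_product_right, upperSum, upperSum]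
        congr 1
        · exact Finset.sum_congr rfl fun A hA => by rw [hsplit A hA, Finset.mul_sum]
        · exact Finset.sum_congr rfl fun B hB => by rw [hsplit' B hB, Finset.mul_sum]

theorem upperSInt_add_le (h𝒜L : IsFieldOver H 𝒜L) (hπ : IsFAP 𝒜L π)
    (hX : ∀ i, |X i| ≤ M) (hY : ∀ i, |Y i| ≤ M') :
    upperSInt H 𝒜L (X + Y) π ≤ upperSInt H 𝒜L X π + upperSInt H 𝒜L Y π := by
  have hne (Z : ι → ℝ) : {x | ∃ T, IsFinPart 𝒜L T ∧ x = upperSum H Z π T}.Nonempty :=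
    ⟨_, _, (isFinDecomp_pair h𝒜L.1 h𝒜L.1.1).isFinPart_filter_nonempty, rfl⟩
  refine le_of_forall_pos_le_add fun ε hε => ?_
  obtain ⟨_, ⟨T, hT, rfl⟩, hTε⟩ := Real.lt_sInf_add_pos (hne X) (half_pos hε)
  obtain ⟨_, ⟨T', hT', rfl⟩, hT'ε⟩ := Real.lt_sInf_add_pos (hne Y) (half_pos hε)
  have hXY : ∀ i, |(X + Y) i| ≤ M + M' := fun i =>
    (abs_add_le _ _).trans (add_le_add (hX i) (hY i))
  have := (upperSInt_le_upperSum h𝒜L hπ hXY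
    (hT.isFinDecomp.image_inter h𝒜L.1 hT'.isFinDecomp)).trans
    (upperSum_image_inter_le h𝒜L hπ hX hY hT.isFinDecomp hT'.isFinDecomp)
  rw [← upperSInt_eq_sInf] at hTε hT'ε
  linarith

end Bounded

theorem exists_linearMap_le_upperSInt_apply_eq (h𝒜L : IsFieldOver H 𝒜L) (hπ : IsFAP 𝒜L π)
    (X : boundedFunctions ι) :
    ∃ L : boundedFunctions ι →ₗ[ℝ] ℝ,
      (∀ Y, L Y ≤ upperSInt H 𝒜L Y π) ∧ L X = upperSInt H 𝒜L X π := by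
  refine LinearMap.exists_le_sublinear_apply_eq (fun Y : boundedFunctions ι => upperSInt H 𝒜L Y π)
    (fun c hc Y => by rw [Submodule.coe_smul, upperSInt_smul hc.le]) (fun Y Z => ?_) X
  rw [Submodule.coe_add]
  obtain ⟨M, hM⟩ := mem_boundedFunctions.1 Y.2
  obtain ⟨M', hM'⟩ := mem_boundedFunctions.1 Z.2
  exact upperSInt_add_le h𝒜L hπ hM hM'

end UpperIntegral

section JointFromFunctional

variable {ι : Type*} {𝒜 𝒜L : Set (Set Ω)} {H : ι → Set Ω} {π : Set Ω → ℝ}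
  {σ : Set Ω → ι → ℝ}

theorem exists_isJointOf_apply_eq [Nonempty Ω] (hH : IsPartition H) (h𝒜L : IsFieldOver H 𝒜L)
    (h𝒜 : IsSetField 𝒜) (h𝒜L𝒜 : 𝒜L ⊆ 𝒜) (hπ : IsFAP 𝒜L π) (hσ : IsStrategy 𝒜 H σ)
    (L : boundedFunctions ι →ₗ[ℝ] ℝ) (hL : ∀ X, L X ≤ upperSInt H 𝒜L X π)
    {F : Set Ω} (hF : F ∈ 𝒜) :
    ∃ μ, IsJointOf 𝒜 𝒜L H π σ μ ∧ μ F = L (hσ.toBounded hF) := by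
  have hH𝒜 : ∀ i, H i ∈ 𝒜 := fun i => h𝒜L𝒜 (h𝒜L.2.1 i)
  let μ (G : Set Ω) : ℝ := if hG : G ∈ 𝒜 then L (hσ.toBounded hG) else 0
  have hμ {G : Set Ω} (hG : G ∈ 𝒜) : μ G = L (hσ.toBounded hG) := dif_pos hG
  have hle {G B : Set Ω} (hG : G ∈ 𝒜) (hB : B ∈ 𝒜L) {a b : ℝ}
      (ha : ∀ i, H i ⊆ B → σ G i ≤ a) (hb : ∀ i, H i ⊆ Bᶜ → σ G i ≤ b) :
      μ G ≤ a * π B + b * π Bᶜ :=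
    (hμ hG).trans_le ((hL _).trans
      (upperSInt_le_of_forall_le h𝒜L hπ (hσ.abs_le_one hG) hB ha hb))
  have hge {G B : Set Ω} (hG : G ∈ 𝒜) (hB : B ∈ 𝒜L) {a b : ℝ}
      (ha : ∀ i, H i ⊆ B → a ≤ σ G i) (hb : ∀ i, H i ⊆ Bᶜ → b ≤ σ G i) :
      a * π B + b * π Bᶜ ≤ μ G := by
    have := (hL (-hσ.toBounded hG)).trans (upperSInt_le_of_forall_le h𝒜L hπ
      (fun i => (abs_neg (σ G i)).trans_le (hσ.abs_le_one hG i)) hB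
      (fun i hi => neg_le_neg (ha i hi)) (fun i hi => neg_le_neg (hb i hi)))
    rw [map_neg, ← hμ hG] at this
    linarith
  have hμπ (B : Set Ω) (hB : B ∈ 𝒜L) : μ B = π B := by
    have hB𝒜 := h𝒜L𝒜 hB
    have hout (i : ι) (hi : H i ⊆ Bᶜ) : σ B i = 0 :=
      hσ.apply_eq_zero h𝒜 hH𝒜 hB𝒜 (subset_compl_iff_disjoint_right.1 hi).symm
    have hin (i : ι) (hi : H i ⊆ B) : σ B i = 1 := (hσ i).2 B hB𝒜 hi
    have := hle hB𝒜 hB (a := 1) (b := 0) (fun i hi => (hin i hi).le) fun i hi => (hout i hi).le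
    have := hge hB𝒜 hB (a := 1) (b := 0) (fun i hi => (hin i hi).ge) fun i hi => (hout i hi).ge
    linarith
  refine ⟨μ, ⟨⟨fun G hG => ⟨?_, ?_⟩, ?_, fun A hA B hB hAB => ?_⟩, hμπ, fun G hG i => ?_⟩, hμ hF⟩
  · simpa using hge hG h𝒜L.1.1 (a := 0) (b := 0) (fun i _ => (hσ i).1.nonneg hG)
      fun i _ => (hσ i).1.nonneg hG
  · have := hle hG h𝒜L.1.1 (a := 1) (b := 1) (fun i _ => ((hσ i).1.1 G hG).2)
      fun i _ => ((hσ i).1.1 G hG).2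
    rwa [one_mul, one_mul, hπ.add_compl h𝒜L.1 h𝒜L.1.1] at this
  · rw [hμπ _ h𝒜L.1.1, hπ.2.1]
  · have hunion : hσ.toBounded (h𝒜.2.2 A hA B hB) = hσ.toBounded hA + hσ.toBounded hB :=
      Subtype.ext <| funext fun i => (hσ i).1.2.2 A hA B hB hAB
    rw [hμ hA, hμ hB, hμ (h𝒜.2.2 A hA B hB), hunion, map_add]
  · have hcell : hσ.toBounded (h𝒜.inter_mem hG (hH𝒜 i)) = σ G i • hσ.toBounded (hH𝒜 i) :=
      Subtype.ext <| funext fun j => hσ.apply_inter_cell h𝒜 hH𝒜 hH hG i j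
    rw [hμ (h𝒜.inter_mem hG (hH𝒜 i)), hcell, map_smul, hμ (hH𝒜 i), smul_eq_mul]

theorem image_apply_FCPSet_subset_Icc [Nonempty Ω] (h𝒜 : IsSetField 𝒜) {F : Set Ω}
    (hF : F ∈ 𝒜) : (fun P => P F univ) '' FCPSet 𝒜 𝒜L H π σ ⊆ Icc 0 1 := by
  rintro _ ⟨P, hP, rfl⟩
  exact (hP.1.2.1 univ h𝒜.1 univ_nonempty).1 F hF

end JointFromFunctional

theorem statement9_general {Ω ι κ : Type*} [Nonempty Ω] (H : ι → Set Ω) (E : κ → Set Ω)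
    (𝒜L 𝒜E 𝒜 : Set (Set Ω))
    (hH : IsPartition H)
    (h𝒜L : IsFieldOver H 𝒜L)
    (h𝒜 : IsJointField H E 𝒜L 𝒜E 𝒜)
    (π : Set Ω → ℝ) (hπ : IsFAP 𝒜L π)
    (σ : Set Ω → ι → ℝ) (hσ : IsStrategy 𝒜 H σ)
    (F : Set Ω) (hF : F ∈ 𝒜) :
    lowEnv (FCPSet 𝒜 𝒜L H π σ) F Set.univ ≤ lowerSInt H 𝒜L (fun i => σ F i) π ∧
    upperSInt H 𝒜L (fun i => σ F i) π ≤ upEnv (FCPSet 𝒜 𝒜L H π σ) F Set.univ := by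
  obtain ⟨h𝒜f, h𝒜L𝒜, -⟩ := h𝒜
  have hattained (L : boundedFunctions ι →ₗ[ℝ] ℝ) (hL : ∀ X, L X ≤ upperSInt H 𝒜L X π) :
      L (hσ.toBounded hF) ∈ (fun P => P F univ) '' FCPSet 𝒜 𝒜L H π σ := by
    obtain ⟨μ, hμ, hμF⟩ := exists_isJointOf_apply_eq hH h𝒜L h𝒜f h𝒜L𝒜 hπ hσ L hL hF
    exact ⟨_, lexCond_jointFamily_mem_FCPSet h𝒜f (fun i => h𝒜L𝒜 (h𝒜L.2.1 i)) hH hσ hμ,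
      (lexCond_jointFamily_univ hμ F).trans hμF⟩
  have hIcc := image_apply_FCPSet_subset_Icc (𝒜L := 𝒜L) (H := H) (π := π) (σ := σ) h𝒜f hF
  obtain ⟨L₁, hL₁, hL₁F⟩ := exists_linearMap_le_upperSInt_apply_eq h𝒜L hπ (-hσ.toBounded hF)
  obtain ⟨L₂, hL₂, hL₂F⟩ := exists_linearMap_le_upperSInt_apply_eq h𝒜L hπ (hσ.toBounded hF)
  constructor
  · calc lowEnv (FCPSet 𝒜 𝒜L H π σ) F univ ≤ L₁ (hσ.toBounded hF) :=
          csInf_le (bddBelow_Icc.mono hIcc) (hattained L₁ hL₁)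
      _ = lowerSInt H 𝒜L (fun i => σ F i) π := by
          rw [lowerSInt_eq_neg_upperSInt_neg, ← neg_neg (L₁ _), ← map_neg, hL₁F,
            Submodule.coe_neg, IsStrategy.coe_toBounded]
  · calc upperSInt H 𝒜L (fun i => σ F i) π = L₂ (hσ.toBounded hF) := hL₂F.symm
      _ ≤ upEnv (FCPSet 𝒜 𝒜L H π σ) F univ :=
          le_csSup (bddAbove_Icc.mono hIcc) (hattained L₂ hL₂)

/-- the lower and upper Stieltjes integrals of `σ(F|·)` with respect to `π`
bound the lower and upper joint probabilities. -/
theorem statement9 {Ω ι κ : Type*} [Nonempty Ω] (H : ι → Set Ω) (E : κ → Set Ω)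
    (𝒜L 𝒜E 𝒜 : Set (Set Ω))
    (hH : IsPartition H) (hE : IsPartition E)
    (h𝒜L : IsFieldOver H 𝒜L) (h𝒜E : IsFieldOver E 𝒜E)
    (h𝒜 : IsJointField H E 𝒜L 𝒜E 𝒜)
    (π : Set Ω → ℝ) (hπ : IsFAP 𝒜L π)
    (σ : Set Ω → ι → ℝ) (hσ : IsStrategy 𝒜 H σ)
    (F : Set Ω) (hF : F ∈ 𝒜) :
    lowEnv (FCPSet 𝒜 𝒜L H π σ) F Set.univ ≤ lowerSInt H 𝒜L (fun i => σ F i) π ∧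
    upperSInt H 𝒜L (fun i => σ F i) π ≤ upEnv (FCPSet 𝒜 𝒜L H π σ) F Set.univ :=
  statement9_general H E 𝒜L 𝒜E 𝒜 hH h𝒜L h𝒜 π hπ σ hσ F hF
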